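/- Let J₁, J₂ : ℝⁿ → ℝ be differentiable and suppose x* is Pareto optimal for (J₁, J₂) (no x satisfies Jᵢ(x) ≤ Jᵢ(x*) for i = 1,2 with strict inequality for at least one i). Then there exists t ∈ [0,1] with (1−t)∇J₁(x*) + t∇J₂(x*) = 0, i.e., x* solves the homotopy optimality condition H(x,t) = 0 for some t. -/

import Mathlib

/-!
Write `g₁, g₂` for the two gradients at `x*` and put `v = ‖g₂‖ g₁ + ‖g₁‖ g₂`. Then
`⟪gᵢ, v⟫ = ‖gᵢ‖ (‖g₁‖ ‖g₂‖ + ⟪g₁, g₂⟫)`, which is nonnegative by Cauchy–Schwarz, and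
`‖v‖² = 2 ‖g₁‖ ‖g₂‖ (‖g₁‖ ‖g₂‖ + ⟪g₁, g₂⟫)`. So either `v = 0`, and `v / (‖g₁‖ + ‖g₂‖)` is a
vanishing convex combination of the gradients, or both `⟪gᵢ, v⟫ > 0`, and a short step from `x*`
along `-v` strictly decreases both objectives, contradicting Pareto optimality.
-/

open Filter Set Topology RealInnerProductSpace

theorem HasLineDerivAt.eventually_lt_of_neg {E : Type*} [AddCommGroup E] [Module ℝ E]
    {f : E → ℝ} {f' : ℝ} {x v : E} (hf : HasLineDerivAt ℝ f f' x v) (hneg : f' < 0) :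
    ∀ᶠ s in 𝓝[>] (0 : ℝ), f (x + s • v) < f x := by
  filter_upwards [hf.hasDerivWithinAt.limsup_slope_le' self_notMem_Ioi hneg,
    self_mem_nhdsWithin] with s hslope hs
  simpa using (slope_neg_iff_of_le (le_of_lt hs)).1 hslope

theorem HasGradientAt.eventually_lt_of_inner_neg {F : Type*} [NormedAddCommGroup F]
    [InnerProductSpace ℝ F] [CompleteSpace F] {f : F → ℝ} {g x v : F} (hf : HasGradientAt f g x)
    (hneg : ⟪g, v⟫ < 0) : ∀ᶠ s in 𝓝[>] (0 : ℝ), f (x + s • v) < f x :=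
  (hf.hasFDerivAt.hasLineDerivAt v).eventually_lt_of_neg (by simpa using hneg)

theorem exists_convex_comb_eq_zero_or_exists_inner_pos {F : Type*} [NormedAddCommGroup F]
    [InnerProductSpace ℝ F] (g₁ g₂ : F) :
    (∃ t ∈ Icc (0 : ℝ) 1, (1 - t) • g₁ + t • g₂ = 0) ∨ ∃ v, 0 < ⟪g₁, v⟫ ∧ 0 < ⟪g₂, v⟫ := by
  set a := ‖g₁‖
  set b := ‖g₂‖
  set v := b • g₁ + a • g₂ with hv_def
  have ha : 0 ≤ a := norm_nonneg _
  have hb : 0 ≤ b := norm_nonneg _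
  by_cases hv : v = 0
  · left
    rcases eq_or_ne g₁ 0 with rfl | hg₁
    · exact ⟨0, left_mem_Icc.2 zero_le_one, by simp⟩
    have ha_pos : 0 < a := norm_pos_iff.2 hg₁
    refine ⟨a / (a + b), ⟨by positivity, (div_le_one (by positivity)).2 (by linarith)⟩, ?_⟩
    have h1t : 1 - a / (a + b) = b / (a + b) := by field_simp; ring
    rw [h1t, div_eq_inv_mul, div_eq_inv_mul, mul_smul, mul_smul, ← smul_add, ← hv_def, hv,
      smul_zero]
  · right
    have h₁ : ⟪g₁, v⟫ = a * (a * b + ⟪g₁, g₂⟫) := by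
      simp only [v, inner_add_right, real_inner_smul_right, real_inner_self_eq_norm_mul_norm]
      ring
    have h₂ : ⟪g₂, v⟫ = b * (a * b + ⟪g₁, g₂⟫) := by
      simp only [v, inner_add_right, real_inner_smul_right, real_inner_self_eq_norm_mul_norm,
        real_inner_comm g₁ g₂]
      ring
    have hcs : 0 ≤ a * b + ⟪g₁, g₂⟫ := by
      have := neg_le_of_abs_le (abs_real_inner_le_norm g₁ g₂); linarith
    have hvv : ⟪v, v⟫ = 2 * (a * b) * (a * b + ⟪g₁, g₂⟫) := by
      rw [inner_add_left, real_inner_smul_left, real_inner_smul_left, h₁, h₂]; ring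
    have hpos : 0 < 2 * (a * b) * (a * b + ⟪g₁, g₂⟫) := hvv ▸ real_inner_self_pos.2 hv
    have hab : 0 < a * b := by nlinarith
    have hsum : 0 < a * b + ⟪g₁, g₂⟫ := by nlinarith
    exact ⟨v, by rw [h₁]; nlinarith, by rw [h₂]; nlinarith⟩

/-- First-order Fritz–John-type necessary condition for Pareto optimality: if `x*` is
Pareto optimal for differentiable `(J₁, J₂)`, then `(1−t)∇J₁(x*) + t∇J₂(x*) = 0` for
some `t ∈ [0,1]`, i.e. `x*` solves the homotopy optimality condition for some `t`. -/
theorem pareto_optimal_fritz_john {n : ℕ}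
    (J₁ J₂ : EuclideanSpace ℝ (Fin n) → ℝ)
    (hJ₁ : Differentiable ℝ J₁) (hJ₂ : Differentiable ℝ J₂)
    (xstar : EuclideanSpace ℝ (Fin n))
    (hpareto : ¬∃ x, J₁ x ≤ J₁ xstar ∧ J₂ x ≤ J₂ xstar ∧
      (J₁ x < J₁ xstar ∨ J₂ x < J₂ xstar)) :
    ∃ t ∈ Set.Icc (0 : ℝ) 1,
      (1 - t) • gradient J₁ xstar + t • gradient J₂ xstar = 0 := by
  refine (exists_convex_comb_eq_zero_or_exists_inner_pos _ _).resolve_right ?_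
  rintro ⟨v, hv₁, hv₂⟩
  have hdesc₁ := (hJ₁ xstar).hasGradientAt.eventually_lt_of_inner_neg (v := -v)
    (by rwa [inner_neg_right, neg_lt_zero])
  have hdesc₂ := (hJ₂ xstar).hasGradientAt.eventually_lt_of_inner_neg (v := -v)
    (by rwa [inner_neg_right, neg_lt_zero])
  obtain ⟨s, hs₁, hs₂⟩ := (hdesc₁.and hdesc₂).exists
  exact hpareto ⟨xstar + s • -v, hs₁.le, hs₂.le, Or.inl hs₁⟩
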